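/- arXiv:2205.10099 — 7 statements merged into one kernel-verified Lean document; each statement's English description precedes it below -/
import Mathlib

section
/- Every facet of the dual complex K' of a finite simplicial complex K is of the form Cont_j = {J : J facet of K, j ∈ J} for some vertex j of K. -/
open scoped BigOperators

noncomputable section

variable {V : Type*} [Fintype V] [DecidableEq V]

def IsComplex (K : Finset (Finset V)) : Prop :=
  ∅ ∈ K ∧ (∀ v : V, {v} ∈ K) ∧ ∀ F ∈ K, ∀ G ⊆ F, G ∈ K

def facets (K : Finset (Finset V)) : Finset (Finset V) :=
  K.filter fun J => ∀ J' ∈ K, J ⊆ J' → J = J'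

def contV (K : Finset (Finset V)) (i : V) : Finset (Finset V) :=
  (facets K).filter fun J => i ∈ J

def dual (K : Finset (Finset V)) : Finset (Finset (Finset V)) :=
  (facets K).powerset.filter fun α => (α.inf id).Nonempty

def geomFace {W : Type*} [Fintype W] (F : Finset W) : Set (W → ℝ) :=
  {x | (∀ w, 0 ≤ x w) ∧ (∑ w, x w) = 1 ∧ ∀ w, x w ≠ 0 → w ∈ F}

def geom {W : Type*} [Fintype W] (L : Finset (Finset W)) : Set (W → ℝ) :=
  ⋃ F ∈ L, geomFace F

def supp {W : Type*} [Fintype W] [DecidableEq W] (x : W → ℝ) : Finset W :=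
  Finset.univ.filter fun w => x w ≠ 0

def Faithful {d : ℕ} (K : Finset (Finset V))
    (f : (Finset V → ℝ) → EuclideanSpace ℝ (Fin d)) : Prop :=
  ∀ I : Finset V, (⋂ i ∈ I, f '' geomFace (contV K i)).Nonempty → I ∈ K

def affExt {W : Type*} [Fintype W] {E : Type*} [AddCommGroup E] [Module ℝ E]
    (p : W → E) (x : W → ℝ) : E := ∑ w, x w • p w

def Hhat (K : Finset (Finset V)) : Set ((Finset V → ℝ) × (Finset V → ℝ)) :=
  {z | z.1 ∈ geom (dual K) ∧ z.2 ∈ geom (dual K) ∧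
    ((supp z.1).inf id ∪ (supp z.2).inf id) ∉ K}

def Matousek (d : ℕ) (K : Finset (Finset V)) : Prop :=
  ∃ g : Hhat K → EuclideanSpace ℝ (Fin d),
    Continuous g ∧ (∀ z, ‖g z‖ = 1) ∧
    ∀ (x y : Finset V → ℝ) (hxy : (x, y) ∈ Hhat K) (hyx : (y, x) ∈ Hhat K),
      g ⟨(y, x), hyx⟩ = - g ⟨(x, y), hxy⟩

def Representable (d : ℕ) (K : Finset (Finset V)) : Prop :=
  ∃ C : V → Set (EuclideanSpace ℝ (Fin d)),
    (∀ i, Convex ℝ (C i)) ∧ ∀ I : Finset V, I ∈ K ↔ (⋂ i ∈ I, C i).Nonempty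

def dimOf {W : Type*} [Fintype W] [DecidableEq W] (L : Finset (Finset W)) : ℕ :=
  (L.sup Finset.card) - 1

theorem eq_of_mem_facets_of_subset {L : Finset (Finset V)} {F G : Finset V}
    (hF : F ∈ facets L) (hG : G ∈ L) (hFG : F ⊆ G) : F = G :=
  (Finset.mem_filter.mp hF).2 G hG hFG

-- The empty intersection is all of `V`, so this holds even when `j` lies in no facet.
theorem contV_mem_dual (K : Finset (Finset V)) (j : V) : contV K j ∈ dual K := by
  refine Finset.mem_filter.mpr ⟨Finset.mem_powerset.mpr (Finset.filter_subset _ _), j, ?_⟩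
  exact Finset.mem_inf.mpr fun J hJ => (Finset.mem_filter.mp hJ).2

theorem subset_contV_of_mem_inf {K : Finset (Finset V)} {α : Finset (Finset V)} {j : V}
    (hα : α ⊆ facets K) (hj : j ∈ α.inf id) : α ⊆ contV K j :=
  fun J hJ => Finset.mem_filter.mpr ⟨hα hJ, Finset.mem_inf.mp hj J hJ⟩

theorem exists_subset_contV_of_mem_dual {K : Finset (Finset V)} {α : Finset (Finset V)}
    (hα : α ∈ dual K) : ∃ j, α ⊆ contV K j := by
  obtain ⟨hsub, j, hj⟩ := Finset.mem_filter.mp hα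
  exact ⟨j, subset_contV_of_mem_inf (Finset.mem_powerset.mp hsub) hj⟩

theorem stmt2_general (K : Finset (Finset V))
    (a : Finset (Finset V)) (ha : a ∈ facets (dual K)) :
    ∃ j : V, a = contV K j := by
  obtain ⟨j, hj⟩ := exists_subset_contV_of_mem_dual (Finset.mem_filter.mp ha).1
  exact ⟨j, eq_of_mem_facets_of_subset ha (contV_mem_dual K j) hj⟩

/-- every facet of the dual complex is of the form `contV K j`. -/
theorem stmt2 [Nonempty V] (K : Finset (Finset V)) (hK : IsComplex K)
    (a : Finset (Finset V)) (ha : a ∈ facets (dual K)) :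
    ∃ j : V, a = contV K j :=
  stmt2_general K a ha
end
end

section
/- Let K be a finite simplicial complex on vertex set V that is d-representable, i.e., there exist convex sets C_i ⊆ ℝ^d (i ∈ V) whose nerve is K. Define a map f from the geometric realization of the dual complex K' to ℝ^d by sending each vertex of K' (a facet J of K) to a chosen point p_J ∈ ⋂_{i∈J} C_i and extending affinely on simplices. Then f is faithful: for every I ⊆ V, if ⋂_{i∈I} f(|Cont_i|) ≠ ∅ then I is a face of K. -/
open scoped BigOperators

noncomputable section

variable {V : Type*} [Fintype V] [DecidableEq V]

/-- On `|F|` the affine extension is a convex combination of the points `p w`, `w ∈ F`. -/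
theorem image_affExt_geomFace_subset {W : Type*} [Fintype W] {E : Type*} [AddCommGroup E]
    [Module ℝ E] {s : Set E} (hs : Convex ℝ s) {F : Finset W} {p : W → E}
    (hp : ∀ w ∈ F, p w ∈ s) : affExt p '' geomFace F ⊆ s := by
  rintro _ ⟨x, ⟨hx_nonneg, hx_sum, hx_supp⟩, rfl⟩
  have hx_zero : ∀ w ∈ Finset.univ, w ∉ F → x w = 0 := fun w _ hw =>
    by_contra fun hne => hw (hx_supp w hne)
  have hsum_F : ∑ w ∈ F, x w = 1 :=
    (Finset.sum_subset (Finset.subset_univ F) hx_zero).trans hx_sum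
  have haff_F : affExt p x = ∑ w ∈ F, x w • p w :=
    (Finset.sum_subset (Finset.subset_univ F) fun w hw hwF => by
      rw [hx_zero w hw hwF, zero_smul]).symm
  rw [haff_F]
  exact hs.sum_mem (fun w _ => hx_nonneg w) hsum_F hp

theorem stmt3_general {d : ℕ} (K : Finset (Finset V))
    (C : V → Set (EuclideanSpace ℝ (Fin d))) (hconv : ∀ i, Convex ℝ (C i))
    (hnerve : ∀ I : Finset V, I ∈ K ↔ (⋂ i ∈ I, C i).Nonempty)
    (p : Finset V → EuclideanSpace ℝ (Fin d))
    (hp : ∀ J ∈ facets K, p J ∈ ⋂ i ∈ J, C i) :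
    Faithful K (affExt p) := by
  rintro I ⟨q, hq⟩
  rw [hnerve]
  refine ⟨q, Set.mem_iInter₂.2 fun i hi => ?_⟩
  refine image_affExt_geomFace_subset (hconv i) (fun J hJ => ?_) (Set.mem_iInter₂.1 hq i hi)
  obtain ⟨hJ_facet, hiJ⟩ := Finset.mem_filter.1 hJ
  exact Set.mem_iInter₂.1 (hp J hJ_facet) i hiJ

/-- the affine extension of points chosen in the intersections over
facets of a convex representation is a faithful map. -/
theorem stmt3 {d : ℕ} (K : Finset (Finset V)) (hK : IsComplex K)
    (C : V → Set (EuclideanSpace ℝ (Fin d))) (hconv : ∀ i, Convex ℝ (C i))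
    (hnerve : ∀ I : Finset V, I ∈ K ↔ (⋂ i ∈ I, C i).Nonempty)
    (p : Finset V → EuclideanSpace ℝ (Fin d))
    (hp : ∀ J ∈ facets K, p J ∈ ⋂ i ∈ J, C i) :
    Faithful K (affExt p) :=
  stmt3_general K C hconv hnerve p hp
end
end

section
/- A finite simplicial complex K is d-representable if and only if there exists a map f: |K'| → ℝ^d from the geometric realization of its dual complex which is affine on each simplex and faithful. -/
open scoped BigOperators

noncomputable section

variable {V : Type*} [Fintype V] [DecidableEq V]

lemma facets_subset (K : Finset (Finset V)) : facets K ⊆ K := Finset.filter_subset _ _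

lemma exists_facet (K : Finset (Finset V)) {F : Finset V} (hF : F ∈ K) :
    ∃ J ∈ facets K, F ⊆ J := by
  classical
  obtain ⟨m, hm, hmax⟩ : ∃ m ∈ K.filter (F ⊆ ·), ∀ x ∈ K.filter (F ⊆ ·), ¬m < x := by
    obtain ⟨m, hm⟩ := Finset.exists_maximal (s := K.filter (F ⊆ ·)) ⟨F, by simp [hF]⟩
    exact ⟨m, hm.1, fun x hx hlt => not_le_of_gt hlt (hm.2 hx hlt.le)⟩
  simp only [Finset.mem_filter] at hm
  refine ⟨m, ?_, hm.2⟩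
  simp only [facets, Finset.mem_filter]
  refine ⟨hm.1, fun J' hJ' hsub => ?_⟩
  by_contra hne
  exact hmax J' (Finset.mem_filter.2 ⟨hJ', hm.2.trans hsub⟩) (lt_of_le_of_ne hsub hne)

lemma convex_geomFace {W : Type*} [Fintype W] (F : Finset W) : Convex ℝ (geomFace F) := by
  intro x hx y hy a b ha hb hab
  obtain ⟨hx0, hx1, hxs⟩ := hx
  obtain ⟨hy0, hy1, hys⟩ := hy
  refine ⟨fun w => add_nonneg (mul_nonneg ha (hx0 w)) (mul_nonneg hb (hy0 w)), ?_, ?_⟩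
  · simp only [Pi.add_apply, Pi.smul_apply, smul_eq_mul]
    rw [Finset.sum_add_distrib, ← Finset.mul_sum, ← Finset.mul_sum, hx1, hy1]
    simpa using hab
  · intro w hw
    simp only [Pi.add_apply, Pi.smul_apply, smul_eq_mul] at hw
    by_cases hxw : x w = 0
    · by_cases hyw : y w = 0
      · simp [hxw, hyw] at hw
      · exact hys w hyw
    · exact hxs w hxw

lemma isLinearMap_affExt {W : Type*} [Fintype W] {E : Type*} [AddCommGroup E] [Module ℝ E]
    (p : W → E) : IsLinearMap ℝ (affExt p) := by
  constructor
  · intro x y; simp [affExt, add_smul, Finset.sum_add_distrib]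
  · intro c x; simp [affExt, Finset.smul_sum, smul_smul]

lemma single_mem_geomFace {W : Type*} [Fintype W] [DecidableEq W] {F : Finset W} {w₀ : W}
    (h : w₀ ∈ F) : (fun w => if w = w₀ then (1:ℝ) else 0) ∈ geomFace F := by
  refine ⟨fun w => by dsimp only; split <;> norm_num, by simp, fun w hw => ?_⟩
  by_cases hww : w = w₀
  · exact hww ▸ h
  · simp [hww] at hw

lemma affExt_single {W : Type*} [Fintype W] [DecidableEq W] {E : Type*} [AddCommGroup E]
    [Module ℝ E] (p : W → E) (w₀ : W) :
    affExt p (fun w => if w = w₀ then (1:ℝ) else 0) = p w₀ := by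
  rw [affExt]
  rw [Finset.sum_congr rfl (fun w _ => by rw [ite_smul, one_smul, zero_smul])]
  simp

lemma affExt_mem_of_forall {W : Type*} [Fintype W] [DecidableEq W] {E : Type*}
    [AddCommGroup E] [Module ℝ E] (p : W → E) {s : Set E}
    (hs : Convex ℝ s) {F : Finset W} (hp : ∀ w ∈ F, p w ∈ s)
    {x : W → ℝ} (hx : x ∈ geomFace F) : affExt p x ∈ s := by
  obtain ⟨h0, h1, hsupp⟩ := hx
  have heq : affExt p x = ∑ w ∈ Finset.univ.filter (fun w => x w ≠ 0), x w • p w := by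
    rw [affExt]
    refine (Finset.sum_subset (Finset.filter_subset _ _) ?_).symm
    intro w _ hw
    simp only [Finset.mem_filter, Finset.mem_univ, true_and, not_not] at hw
    simp [hw]
  rw [heq]
  refine hs.sum_mem (fun w _ => h0 w) ?_ ?_
  · rw [Finset.sum_filter_ne_zero]
    exact h1
  · intro w hw
    simp only [Finset.mem_filter] at hw
    exact hp w (hsupp w hw.2)

/-- `K` is `d`-representable iff there is an affine faithful map
`|K'| → ℝ^d`. -/
theorem stmt5 {d : ℕ} (K : Finset (Finset V)) (hK : IsComplex K) :
    Representable d K ↔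
      ∃ p : Finset V → EuclideanSpace ℝ (Fin d), Faithful K (affExt p) := by
  classical
  constructor
  · rintro ⟨C, hCconv, hCK⟩
    set p : Finset V → EuclideanSpace ℝ (Fin d) :=
      fun J => if h : (⋂ i ∈ J, C i).Nonempty then h.choose else 0 with hpdef
    have hpmem : ∀ J ∈ K, ∀ i ∈ J, p J ∈ C i := by
      intro J hJ i hi
      have hne : (⋂ i ∈ J, C i).Nonempty := (hCK J).mp hJ
      have hmem : p J ∈ ⋂ i ∈ J, C i := by
        rw [hpdef]; simp only [dif_pos hne]; exact hne.choose_spec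
      exact Set.mem_iInter₂.mp hmem i hi
    refine ⟨p, ?_⟩
    intro I hI
    obtain ⟨q, hq⟩ := hI
    rw [hCK]
    refine ⟨q, Set.mem_iInter₂.mpr fun i hi => ?_⟩
    obtain ⟨x, hx, hxq⟩ := Set.mem_iInter₂.mp hq i hi
    rw [← hxq]
    refine affExt_mem_of_forall p (hCconv i) (fun w hw => ?_) hx
    rw [contV, Finset.mem_filter] at hw
    exact hpmem w (facets_subset K hw.1) i hw.2
  · rintro ⟨p, hp⟩
    refine ⟨fun i => affExt p '' geomFace (contV K i),
      fun i => (convex_geomFace _).is_linear_image (isLinearMap_affExt p), fun I => ?_⟩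
    constructor
    · intro hI
      obtain ⟨J, hJ, hIJ⟩ := exists_facet K hI
      refine ⟨p J, Set.mem_iInter₂.mpr fun i hi => ?_⟩
      refine ⟨fun w => if w = J then 1 else 0, single_mem_geomFace ?_, affExt_single p J⟩
      rw [contV, Finset.mem_filter]
      exact ⟨hJ, hIJ hi⟩
    · exact fun h => hp I h
end
end

section
/- Let K be a finite simplicial complex such that there exists a faithful continuous map f: |K'| → ℝ^d. Then K is d-Matoušek: there exists a continuous map g: Ĥ(K) → S^{d-1} with g(y,x) = -g(x,y) for all (x,y) ∈ Ĥ(K), where Ĥ(K) = {(x,y) ∈ |K'|² : (⋂ supp(x)) ∪ (⋂ supp(y)) ∉ K}. One may take g(x,y) = (f(x)-f(y))/|f(x)-f(y)|. -/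
open scoped BigOperators

noncomputable section

variable {V : Type*} [Fintype V] [DecidableEq V]

/-! Faithfulness forces `f x ≠ f y` on `Ĥ(K)`: a common value of `f x` and `f y` would lie in
`f(|Cont_i|)` for every `i ∈ (⋂ supp x) ∪ (⋂ supp y)`. So `g(x, y) = (f x - f y) / ‖f x - f y‖` is
well defined, continuous, of norm one, and antisymmetric because `normalize` is odd. -/

open NormedSpace

theorem Continuous.normalize {X E : Type*} [TopologicalSpace X] [NormedAddCommGroup E]
    [NormedSpace ℝ E] {g : X → E} (hg : Continuous g) (hg0 : ∀ x, g x ≠ 0) :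
    Continuous fun x => normalize (g x) :=
  (hg.norm.inv₀ fun x => norm_ne_zero_iff.2 (hg0 x)).smul hg

lemma mem_geomFace_contV_of_mem_inf_supp {K : Finset (Finset V)} {x : Finset V → ℝ}
    (hx : x ∈ geom (dual K)) {i : V} (hi : i ∈ (supp x).inf id) :
    x ∈ geomFace (contV K i) := by
  rw [geom, Set.mem_iUnion₂] at hx
  obtain ⟨α, hα, hxα⟩ := hx
  rw [dual, Finset.mem_filter, Finset.mem_powerset] at hα
  refine ⟨hxα.1, hxα.2.1, fun J hJ => Finset.mem_filter.2 ⟨hα.1 (hxα.2.2 J hJ), ?_⟩⟩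
  have hJ_supp : J ∈ supp x := by simp [supp, hJ]
  exact Finset.inf_le (f := id) hJ_supp hi

lemma Faithful.apply_ne_apply_of_mem_Hhat {d : ℕ} {K : Finset (Finset V)}
    {f : (Finset V → ℝ) → EuclideanSpace ℝ (Fin d)} (hfaith : Faithful K f)
    {z : (Finset V → ℝ) × (Finset V → ℝ)} (hz : z ∈ Hhat K) :
    f z.1 ≠ f z.2 := by
  intro heq
  obtain ⟨hx, hy, hnK⟩ := hz
  refine hnK (hfaith _ ⟨f z.1, Set.mem_iInter₂.2 fun i hi => ?_⟩)
  rcases Finset.mem_union.1 hi with hi | hi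
  · exact ⟨z.1, mem_geomFace_contV_of_mem_inf_supp hx hi, rfl⟩
  · exact ⟨z.2, mem_geomFace_contV_of_mem_inf_supp hy hi, heq.symm⟩

theorem stmt8_general {d : ℕ} (K : Finset (Finset V))
    (f : (Finset V → ℝ) → EuclideanSpace ℝ (Fin d))
    (hcont : ContinuousOn f (geom (dual K)))
    (hfaith : Faithful K f) :
    Matousek d K := by
  have hne (z : Hhat K) : f z.1.1 - f z.1.2 ≠ 0 :=
    sub_ne_zero.2 (hfaith.apply_ne_apply_of_mem_Hhat z.2)
  have hdiff : Continuous fun z : Hhat K => f z.1.1 - f z.1.2 :=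
    (hcont.comp_continuous (continuous_fst.comp continuous_subtype_val) fun z => z.2.1).sub
      (hcont.comp_continuous (continuous_snd.comp continuous_subtype_val) fun z => z.2.2.1)
  refine ⟨fun z => normalize (f z.1.1 - f z.1.2), hdiff.normalize hne,
    fun z => norm_normalize_eq_one_iff.2 (hne z), fun x y _ _ => ?_⟩
  show normalize (f y - f x) = -normalize (f x - f y)
  rw [← neg_sub, normalize_neg]

/-- existence of a faithful continuous map `|K'| → ℝ^d` implies
that `K` is `d`-Matoušek. -/
theorem stmt8 {d : ℕ} (K : Finset (Finset V)) (hK : IsComplex K)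
    (f : (Finset V → ℝ) → EuclideanSpace ℝ (Fin d))
    (hcont : ContinuousOn f (geom (dual K)))
    (hfaith : Faithful K f) :
    Matousek d K :=
  stmt8_general K f hcont hfaith
end
end

section
/- Every d-representable finite simplicial complex is d-Matoušek. -/
open scoped BigOperators

noncomputable section

variable {V : Type*} [Fintype V] [DecidableEq V]

/-!
Given convex sets `C i` representing `K`, choose `p J ∈ ⋂ i ∈ J, C i` for every face `J` and
extend `p` affinely to `f := affExt p`. A point `x` of the dual nerve is mapped into every `C i` with `i` common to the
facets of `supp x`, by convexity. So if `f x = f y`, that point lies in `C i` for all `i` in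
`(⋂ supp x) ∪ (⋂ supp y)`, which is then a face; hence on `Hhat K` the vector `f x - f y`
never vanishes, and normalizing it gives the odd map to the sphere.
-/

section AffineExtension

variable {W E : Type*} [Fintype W]

lemma affExt_eq_sum_supp [DecidableEq W] [AddCommGroup E] [Module ℝ E] (p : W → E)
    (x : W → ℝ) : affExt p x = ∑ w ∈ supp x, x w • p w := by
  refine (Finset.sum_subset (Finset.subset_univ _) fun w _ hw => ?_).symm
  simp only [supp, Finset.mem_filter, Finset.mem_univ, true_and, not_not] at hw
  rw [hw, zero_smul]

lemma affExt_mem_of_convex [DecidableEq W] [AddCommGroup E] [Module ℝ E] {C : Set E}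
    (hC : Convex ℝ C) {p : W → E} {x : W → ℝ} (hx₀ : ∀ w, 0 ≤ x w) (hx₁ : ∑ w, x w = 1)
    (hp : ∀ w ∈ supp x, p w ∈ C) : affExt p x ∈ C := by
  rw [affExt_eq_sum_supp]
  exact hC.sum_mem (fun w _ => hx₀ w) ((Finset.sum_filter_ne_zero _).trans hx₁) hp

lemma continuous_affExt [NormedAddCommGroup E] [NormedSpace ℝ E] (p : W → E) :
    Continuous (affExt p) :=
  continuous_finsetSum _ fun w _ => (continuous_apply w).smul continuous_const

end AffineExtension

lemma affExt_mem_iInter_of_mem_geom_dual {E : Type*} [AddCommGroup E] [Module ℝ E]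
    {K : Finset (Finset V)} {C : V → Set E} (hC : ∀ i, Convex ℝ (C i))
    {p : Finset V → E} (hp : ∀ J ∈ K, p J ∈ ⋂ i ∈ J, C i) {x : Finset V → ℝ}
    (hx : x ∈ geom (dual K)) : affExt p x ∈ ⋂ i ∈ (supp x).inf id, C i := by
  obtain ⟨α, hα, hx₀, hx₁, hxα⟩ := Set.mem_iUnion₂.1 hx
  have hαK : α ⊆ K := (Finset.mem_powerset.1 (Finset.mem_of_mem_filter _ hα)).trans
    (Finset.filter_subset _ _)
  refine Set.mem_iInter₂.2 fun i hi => affExt_mem_of_convex (hC i) hx₀ hx₁ fun J hJ => ?_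
  exact Set.mem_iInter₂.1 (hp J (hαK (hxα J (Finset.mem_filter.1 hJ).2))) i
    (Finset.inf_le (f := id) hJ hi)

lemma matousek_of_separating {d : ℕ} {K : Finset (Finset V)}
    {f : (Finset V → ℝ) → EuclideanSpace ℝ (Fin d)} (hf : Continuous f)
    (hsep : ∀ z ∈ Hhat K, f z.1 ≠ f z.2) : Matousek d K := by
  set v : Hhat K → EuclideanSpace ℝ (Fin d) := fun z => f z.1.1 - f z.1.2
  have hv : ∀ z, ‖v z‖ ≠ 0 := fun z => norm_ne_zero_iff.2 (sub_ne_zero.2 (hsep z z.2))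
  refine ⟨fun z => ‖v z‖⁻¹ • v z, ?_, fun z => ?_, fun x y hxy hyx => ?_⟩
  · have hvc : Continuous v := by fun_prop
    exact (hvc.norm.inv₀ hv).smul hvc
  · rw [norm_smul, norm_inv, norm_norm, inv_mul_cancel₀ (hv z)]
  · have : v ⟨(y, x), hyx⟩ = -v ⟨(x, y), hxy⟩ := (neg_sub _ _).symm
    simp only [this, norm_neg, smul_neg]

theorem stmt9_general {d : ℕ} (K : Finset (Finset V))
    (hrep : Representable d K) :
    Matousek d K := by
  obtain ⟨C, hC, hCK⟩ := hrep
  choose! p hp using fun J (hJ : J ∈ K) => (hCK J).1 hJ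
  refine matousek_of_separating (continuous_affExt p) fun ⟨x, y⟩ ⟨hx, hy, hxy⟩ heq => hxy ?_
  refine (hCK _).2 ⟨affExt p x, ?_⟩
  rw [Finset.set_biInter_inter]
  exact ⟨affExt_mem_iInter_of_mem_geom_dual hC hp hx,
    heq ▸ affExt_mem_iInter_of_mem_geom_dual hC hp hy⟩

/-- every `d`-representable complex is `d`-Matoušek. -/
theorem stmt9 {d : ℕ} (K : Finset (Finset V)) (hK : IsComplex K)
    (hrep : Representable d K) :
    Matousek d K :=
  stmt9_general K hrep
end
end

section
/- Let K be a finite simplicial complex which is the nerve of a good cover U_1,…,U_n in ℝ^d (all nonempty intersections of the U_i are homeomorphic to an open d-ball, in particular contractible). Then there exists a faithful continuous map f: |K'| → ℝ^d; consequently K is d-Matoušek. -/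
open scoped BigOperators

noncomputable section

variable {V : Type*} [Fintype V] [DecidableEq V]

namespace Stmt10

variable {n d : ℕ}

/-! ### Basic lemmas about `supp`, `geomFace`, `geom`, `dual` -/

lemma mem_supp {x : Finset (Fin n) → ℝ} {J : Finset (Fin n)} :
    J ∈ supp x ↔ x J ≠ 0 := by simp [supp]

lemma supp_subset {F : Finset (Finset (Fin n))} {x : Finset (Fin n) → ℝ}
    (hx : x ∈ geomFace F) : supp x ⊆ F := fun J hJ => hx.2.2 J (mem_supp.1 hJ)

lemma eq_zero_of_not_mem_supp {x : Finset (Fin n) → ℝ} {J : Finset (Fin n)}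
    (h : J ∉ supp x) : x J = 0 := by
  by_contra hc; exact h (mem_supp.2 hc)

lemma supp_nonempty {x : Finset (Fin n) → ℝ} (hx : (∑ w, x w) = 1) :
    (supp x).Nonempty := by
  rcases Finset.exists_ne_zero_of_sum_ne_zero (by rw [hx]; exact one_ne_zero) with ⟨w, _, hw⟩
  exact ⟨w, mem_supp.2 hw⟩

lemma sum_eq_on_face {F : Finset (Finset (Fin n))} {x : Finset (Fin n) → ℝ}
    (hx : x ∈ geomFace F) : ∑ J ∈ F, x J = 1 := by
  rw [← hx.2.1]
  exact Finset.sum_subset (Finset.subset_univ F) fun w _ hw => by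
    by_contra hc; exact hw (hx.2.2 w hc)

lemma mem_geomFace_supp {x : Finset (Fin n) → ℝ} (h0 : ∀ w, 0 ≤ x w)
    (h1 : (∑ w, x w) = 1) : x ∈ geomFace (supp x) :=
  ⟨h0, h1, fun w hw => mem_supp.2 hw⟩

lemma mem_dual {K : Finset (Finset (Fin n))} {α : Finset (Finset (Fin n))} :
    α ∈ dual K ↔ α ⊆ facets K ∧ (α.inf id).Nonempty := by
  simp [dual, Finset.mem_filter, Finset.mem_powerset]

lemma facets_subset {K : Finset (Finset (Fin n))} : facets K ⊆ K :=
  Finset.filter_subset _ _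

lemma supp_mem_dual {K : Finset (Finset (Fin n))} {α : Finset (Finset (Fin n))}
    {x : Finset (Fin n) → ℝ} (hα : α ∈ dual K) (hx : supp x ⊆ α)
    (hne : (supp x).Nonempty) : supp x ∈ dual K := by
  rw [mem_dual] at hα ⊢
  exact ⟨hx.trans hα.1, hα.2.mono (Finset.le_iff_subset.mp (Finset.inf_mono hx))⟩

lemma mem_geom_iff {K : Finset (Finset (Fin n))} {x : Finset (Fin n) → ℝ} :
    x ∈ geom (dual K) ↔ (∀ w, 0 ≤ x w) ∧ (∑ w, x w) = 1 ∧ supp x ∈ dual K := by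
  constructor
  · rintro hx
    rcases Set.mem_iUnion₂.1 hx with ⟨β, hβ, hxβ⟩
    exact ⟨hxβ.1, hxβ.2.1,
      supp_mem_dual hβ (supp_subset hxβ) (supp_nonempty hxβ.2.1)⟩
  · rintro ⟨h0, h1, hs⟩
    exact Set.mem_iUnion₂.2 ⟨supp x, hs, mem_geomFace_supp h0 h1⟩

lemma geomFace_subset_geom {K : Finset (Finset (Fin n))} {α : Finset (Finset (Fin n))}
    (hα : α ∈ dual K) : geomFace α ⊆ geom (dual K) := fun x hx =>
  Set.mem_iUnion₂.2 ⟨α, hα, hx⟩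

section WithCover

variable (U : Fin n → Set (EuclideanSpace ℝ (Fin d)))

attribute [local instance] Classical.propDecidable

/-- The intersection of the cover sets indexed by the common part of `α`. -/
def Wset (α : Finset (Finset (Fin n))) : Set (EuclideanSpace ℝ (Fin d)) :=
  ⋂ i ∈ (α.inf id), U i

lemma Wset_mono {α β : Finset (Finset (Fin n))} (h : β ⊆ α) :
    Wset U β ⊆ Wset U α := by
  intro p hp
  refine Set.mem_iInter₂.2 fun i hi => ?_
  exact Set.mem_iInter₂.1 hp i (Finset.le_iff_subset.mp (Finset.inf_mono h) hi)

variable {U}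

lemma mem_U_of_mem_Wset {α : Finset (Finset (Fin n))} {p : EuclideanSpace ℝ (Fin d)}
    (hp : p ∈ Wset U α) {i : Fin n} (hi : i ∈ α.inf id) : p ∈ U i :=
  Set.mem_iInter₂.1 hp i hi

variable (U)

/-- minimum of the coordinates over `α` (junk `0` if `α = ∅`). -/
def mn (α : Finset (Finset (Fin n))) (x : Finset (Fin n) → ℝ) : ℝ :=
  if h : α.Nonempty then α.inf' h x else 0

/-- radial parameter. -/
def tP (α : Finset (Finset (Fin n))) (x : Finset (Fin n) → ℝ) : ℝ :=
  1 - α.card * mn α x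

/-- barycenter of the face `α`. -/
def bc (α : Finset (Finset (Fin n))) : Finset (Fin n) → ℝ :=
  fun J => if J ∈ α then (α.card : ℝ)⁻¹ else 0

/-- radial projection away from the barycenter. -/
def rP (α : Finset (Finset (Fin n))) (x : Finset (Fin n) → ℝ) : Finset (Fin n) → ℝ :=
  fun J => if J ∈ α then (x J - (α.card : ℝ)⁻¹) / tP α x + (α.card : ℝ)⁻¹ else 0

def bptF (α : Finset (Finset (Fin n)))
    (g : (Finset (Fin n) → ℝ) → EuclideanSpace ℝ (Fin d))
    (x : Finset (Fin n) → ℝ) : EuclideanSpace ℝ (Fin d) :=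
  if hH : Nonempty (Wset U α ≃ₜ Metric.ball (0 : EuclideanSpace ℝ (Fin d)) 1) then
    if hy : g (rP α x) ∈ Wset U α then
      ((Classical.choice hH) ⟨g (rP α x), hy⟩ : EuclideanSpace ℝ (Fin d)) else 0
  else 0

def uFF (α : Finset (Finset (Fin n)))
    (g : (Finset (Fin n) → ℝ) → EuclideanSpace ℝ (Fin d))
    (x : Finset (Fin n) → ℝ) : EuclideanSpace ℝ (Fin d) :=
  tP α x • bptF U α g x

def outF (α : Finset (Finset (Fin n))) (u : EuclideanSpace ℝ (Fin d)) :
    EuclideanSpace ℝ (Fin d) :=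
  if hH : Nonempty (Wset U α ≃ₜ Metric.ball (0 : EuclideanSpace ℝ (Fin d)) 1) then
    if hu : u ∈ Metric.ball (0 : EuclideanSpace ℝ (Fin d)) 1 then
      (((Classical.choice hH).symm ⟨u, hu⟩ : Wset U α) : EuclideanSpace ℝ (Fin d)) else 0
  else 0

def stepF (α : Finset (Finset (Fin n)))
    (g : (Finset (Fin n) → ℝ) → EuclideanSpace ℝ (Fin d))
    (x : Finset (Fin n) → ℝ) : EuclideanSpace ℝ (Fin d) :=
  outF U α (uFF U α g x)

/-- the approximations to the faithful map -/
def fA : ℕ → (Finset (Fin n) → ℝ) → EuclideanSpace ℝ (Fin d)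
  | 0, _ => 0
  | m+1, x => if (supp x).card ≤ m then fA m x else stepF U (supp x) (fA m) x

/-- the faithful map -/
def ffmap (x : Finset (Fin n) → ℝ) : EuclideanSpace ℝ (Fin d) :=
  fA U (supp x).card x

variable {U}

lemma fA_stab : ∀ {m : ℕ} {x : Finset (Fin n) → ℝ}, (supp x).card ≤ m →
    fA U m x = ffmap U x := by
  intro m
  induction m with
  | zero => intro x hx; rw [ffmap, Nat.le_zero.1 hx]
  | succ m ih =>
      intro x hx
      by_cases h : (supp x).card ≤ m
      · rw [fA, if_pos h]; exact ih h
      · have : (supp x).card = m + 1 := le_antisymm hx (Nat.lt_of_not_le h)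
        rw [ffmap, this]

/-! ### geometry of the simplex -/

lemma cont_inf' {α : Finset (Finset (Fin n))} (hα : α.Nonempty) :
    Continuous fun x : Finset (Fin n) → ℝ => α.inf' hα x := by
  induction hα using Finset.Nonempty.cons_induction with
  | singleton a =>
      rw [show (fun x : Finset (Fin n) → ℝ =>
        ({a} : Finset (Finset (Fin n))).inf' (Finset.singleton_nonempty a) x)
        = fun x => x a from funext fun x => Finset.inf'_singleton ..]
      exact continuous_apply a
  | cons a s h hs ih =>
      simp only [Finset.inf'_cons (H := hs)]
      exact (continuous_apply a).inf ih

lemma cont_tP {α : Finset (Finset (Fin n))} : Continuous (tP α) := by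
  by_cases hα : α.Nonempty
  · have : tP α = fun x : Finset (Fin n) → ℝ => 1 - (α.card : ℝ) * α.inf' hα x := by
      funext x; rw [tP, mn, dif_pos hα]
    rw [this]
    exact continuous_const.sub (continuous_const.mul (cont_inf' hα))
  · have : tP α = fun _ : Finset (Fin n) → ℝ => (1:ℝ) := by
      funext x; rw [tP, mn, dif_neg hα]; ring
    rw [this]; exact continuous_const

variable {K : Finset (Finset (Fin n))}

lemma mn_eq {α : Finset (Finset (Fin n))} (hα : α.Nonempty) (x : Finset (Fin n) → ℝ) :
    mn α x = α.inf' hα x := by rw [mn, dif_pos hα]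

lemma mn_nonneg {α : Finset (Finset (Fin n))} (hα : α.Nonempty)
    {x : Finset (Fin n) → ℝ} (h0 : ∀ w, 0 ≤ x w) : 0 ≤ mn α x := by
  rw [mn_eq hα]; exact Finset.le_inf' hα x fun b _ => h0 b

lemma mn_le_coord {α : Finset (Finset (Fin n))} (hα : α.Nonempty)
    {x : Finset (Fin n) → ℝ} {J : Finset (Fin n)} (hJ : J ∈ α) :
    mn α x ≤ x J := by
  rw [mn_eq hα]; exact Finset.inf'_le x hJ

lemma card_mul_mn_le {α : Finset (Finset (Fin n))} (hα : α.Nonempty)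
    {x : Finset (Fin n) → ℝ} (hx : x ∈ geomFace α) :
    (α.card : ℝ) * mn α x ≤ 1 := by
  have h := Finset.card_nsmul_le_sum α x (mn α x) fun J hJ => mn_le_coord hα hJ
  rw [sum_eq_on_face hx] at h
  rwa [nsmul_eq_mul] at h

lemma tP_nonneg {α : Finset (Finset (Fin n))} (hα : α.Nonempty)
    {x : Finset (Fin n) → ℝ} (hx : x ∈ geomFace α) : 0 ≤ tP α x := by
  rw [tP]; linarith [card_mul_mn_le hα hx]

lemma tP_le_one {α : Finset (Finset (Fin n))} (hα : α.Nonempty)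
    {x : Finset (Fin n) → ℝ} (hx : x ∈ geomFace α) : tP α x ≤ 1 := by
  have h1 : 0 ≤ mn α x := mn_nonneg hα hx.1
  have h2 : (0:ℝ) ≤ α.card := Nat.cast_nonneg _
  rw [tP]; nlinarith

lemma card_ne_zero_R {α : Finset (Finset (Fin n))} (hα : α.Nonempty) :
    (α.card : ℝ) ≠ 0 :=
  Nat.cast_ne_zero.2 (Finset.card_ne_zero_of_mem hα.choose_spec)

lemma bc_mem {α : Finset (Finset (Fin n))} (hα : α.Nonempty) : bc α ∈ geomFace α := by
  refine ⟨fun w => ?_, ?_, fun w hw => ?_⟩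
  · rw [bc]; split
    · positivity
    · exact le_refl 0
  · calc ∑ w, bc α w = ∑ w ∈ α, bc α w :=
          (Finset.sum_subset (Finset.subset_univ α) fun w _ hw => by
            rw [bc, if_neg hw]).symm
      _ = ∑ _w ∈ α, (α.card : ℝ)⁻¹ :=
          Finset.sum_congr rfl fun w hw => by rw [bc, if_pos hw]
      _ = 1 := by
          rw [Finset.sum_const, nsmul_eq_mul, mul_inv_cancel₀ (card_ne_zero_R hα)]
  · rw [bc] at hw; by_contra hc; rw [if_neg hc] at hw; exact hw rfl

lemma tP_bc {α : Finset (Finset (Fin n))} (hα : α.Nonempty) : tP α (bc α) = 0 := by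
  have : mn α (bc α) = (α.card : ℝ)⁻¹ := by
    rw [mn_eq hα,
      Finset.inf'_congr hα rfl (fun J hJ => show bc α J = (α.card : ℝ)⁻¹ by
        rw [bc, if_pos hJ]),
      Finset.inf'_const]
  rw [tP, this, mul_inv_cancel₀ (card_ne_zero_R hα), sub_self]

lemma eq_bc_of_tP_eq_zero {α : Finset (Finset (Fin n))} (hα : α.Nonempty)
    {x : Finset (Fin n) → ℝ} (hx : x ∈ geomFace α) (ht : tP α x = 0) :
    x = bc α := by
  have hmn : (α.card : ℝ) * mn α x = 1 := by rw [tP] at ht; linarith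
  have hsum : ∑ J ∈ α, (x J - mn α x) = 0 := by
    rw [Finset.sum_sub_distrib, sum_eq_on_face hx, Finset.sum_const, nsmul_eq_mul, hmn,
      sub_self]
  have hz : ∀ J ∈ α, x J - mn α x = 0 := by
    rw [← Finset.sum_eq_zero_iff_of_nonneg (fun J hJ => sub_nonneg.2 (mn_le_coord hα hJ))]
    exact hsum
  have hmn' : mn α x = (α.card : ℝ)⁻¹ := eq_inv_of_mul_eq_one_left (by linarith [hmn])
  funext J
  by_cases hJ : J ∈ α
  · have := hz J hJ
    rw [bc, if_pos hJ, ← hmn']; linarith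
  · rw [bc, if_neg hJ]
    by_contra hc
    exact hJ (hx.2.2 J hc)

lemma tP_pos {α : Finset (Finset (Fin n))} (hα : α.Nonempty)
    {x : Finset (Fin n) → ℝ} (hx : x ∈ geomFace α) (hb : x ≠ bc α) :
    0 < tP α x :=
  lt_of_le_of_ne (tP_nonneg hα hx) fun h => hb (eq_bc_of_tP_eq_zero hα hx h.symm)

lemma mn_sub_inv {α : Finset (Finset (Fin n))} (hα : α.Nonempty)
    (x : Finset (Fin n) → ℝ) :
    mn α x - (α.card : ℝ)⁻¹ = -(tP α x / α.card) := by
  have hc := card_ne_zero_R hα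
  rw [tP]; field_simp; ring

/-! ### radial projection lemmas -/

lemma rP_mem {α : Finset (Finset (Fin n))} (hα : α.Nonempty)
    {x : Finset (Fin n) → ℝ} (hx : x ∈ geomFace α) (ht : tP α x ≠ 0) :
    rP α x ∈ geomFace α := by
  have htpos : 0 < tP α x := lt_of_le_of_ne (tP_nonneg hα hx) (Ne.symm ht)
  have hc := card_ne_zero_R hα
  refine ⟨fun J => ?_, ?_, fun J hJ => ?_⟩
  · rw [rP]; by_cases hJ : J ∈ α
    · rw [if_pos hJ]
      have h1 : -(tP α x / α.card) ≤ x J - (α.card : ℝ)⁻¹ := by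
        have ha := mn_le_coord (x := x) hα hJ
        have hb := mn_sub_inv hα x
        linarith
      have h2 : (-(tP α x / α.card)) / tP α x ≤ (x J - (α.card : ℝ)⁻¹) / tP α x := by
        gcongr
      have h3 : (-(tP α x / α.card)) / tP α x = -(α.card : ℝ)⁻¹ := by
        field_simp
      rw [h3] at h2
      linarith
    · rw [if_neg hJ]
  · have hsum : ∑ J ∈ α, rP α x J = 1 := by
      have : ∀ J ∈ α, rP α x J = (x J - (α.card : ℝ)⁻¹) / tP α x + (α.card : ℝ)⁻¹ :=
        fun J hJ => by rw [rP, if_pos hJ]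
      rw [Finset.sum_congr rfl this, Finset.sum_add_distrib, ← Finset.sum_div,
        Finset.sum_sub_distrib, sum_eq_on_face hx, Finset.sum_const]
      simp [nsmul_eq_mul, mul_inv_cancel₀ hc]
    rw [← hsum]
    exact (Finset.sum_subset (Finset.subset_univ α) fun w _ hw => by
      rw [rP, if_neg hw]).symm
  · by_contra hc'
    rw [rP, if_neg hc'] at hJ; exact hJ rfl

lemma rP_argmin_zero {α : Finset (Finset (Fin n))} (hα : α.Nonempty)
    {x : Finset (Fin n) → ℝ} (ht : tP α x ≠ 0) :
    ∃ J₀ ∈ α, rP α x J₀ = 0 := by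
  obtain ⟨J₀, hJ₀, hmin⟩ := Finset.exists_mem_eq_inf' hα x
  refine ⟨J₀, hJ₀, ?_⟩
  have hx0 : x J₀ = mn α x := by rw [mn_eq hα]; exact hmin.symm
  have h3 : (-(tP α x / α.card)) / tP α x = -(α.card : ℝ)⁻¹ := by field_simp
  rw [rP, if_pos hJ₀, hx0]
  rw [show mn α x - (α.card : ℝ)⁻¹ = -(tP α x / α.card) from mn_sub_inv hα x, h3,
    neg_add_cancel]

lemma supp_rP_card_lt {α : Finset (Finset (Fin n))} (hα : α.Nonempty)
    {x : Finset (Fin n) → ℝ} (hx : x ∈ geomFace α) (ht : tP α x ≠ 0) :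
    (supp (rP α x)).card < α.card := by
  obtain ⟨J₀, hJ₀, hz⟩ := rP_argmin_zero hα ht
  have hss : supp (rP α x) ⊆ α.erase J₀ := by
    intro J hJ
    rw [Finset.mem_erase]
    refine ⟨fun h => ?_, supp_subset (rP_mem hα hx ht) hJ⟩
    rw [h] at hJ; exact mem_supp.1 hJ hz
  calc (supp (rP α x)).card ≤ (α.erase J₀).card := Finset.card_le_card hss
    _ < α.card := Finset.card_erase_lt_of_mem hJ₀

/-! ### boundary situation : `supp x ⊊ α` -/

lemma tP_eq_one_of_boundary {α : Finset (Finset (Fin n))} (hα : α.Nonempty)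
    {x : Finset (Fin n) → ℝ} (hx : x ∈ geomFace α) (hne : supp x ≠ α) :
    tP α x = 1 := by
  obtain ⟨J, hJα, hJs⟩ := Finset.exists_of_ssubset (lt_of_le_of_ne (supp_subset hx) hne)
  have h0 : x J = 0 := eq_zero_of_not_mem_supp hJs
  have : mn α x = 0 :=
    le_antisymm (h0 ▸ mn_le_coord hα hJα) (mn_nonneg hα hx.1)
  rw [tP, this, mul_zero, sub_zero]

lemma rP_eq_self_of_boundary {α : Finset (Finset (Fin n))}
    {x : Finset (Fin n) → ℝ} (hx : x ∈ geomFace α) (ht : tP α x = 1) :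
    rP α x = x := by
  funext J
  by_cases hJ : J ∈ α
  · rw [rP, if_pos hJ, ht, div_one, sub_add_cancel]
  · rw [rP, if_neg hJ]
    by_contra hc
    exact hJ (hx.2.2 J fun h => hc h.symm)

/-! ### using the complex and the cover -/

lemma K_down (hK : ∀ I : Finset (Fin n), I ∈ K ↔ (⋂ i ∈ I, U i).Nonempty)
    {I J : Finset (Fin n)} (hJ : J ⊆ I) (hI : I ∈ K) : J ∈ K := by
  rw [hK] at hI ⊢
  obtain ⟨p, hp⟩ := hI
  exact ⟨p, Set.mem_iInter₂.2 fun i hi => Set.mem_iInter₂.1 hp i (hJ hi)⟩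

lemma inf_mem_K (hK : ∀ I : Finset (Fin n), I ∈ K ↔ (⋂ i ∈ I, U i).Nonempty)
    {α : Finset (Finset (Fin n))} (hα : α ∈ dual K) (hne : α.Nonempty) :
    α.inf id ∈ K := by
  obtain ⟨J, hJ⟩ := hne
  have hJK : J ∈ K := facets_subset ((mem_dual.1 hα).1 hJ)
  exact K_down hK (Finset.le_iff_subset.mp (Finset.inf_le hJ)) hJK

lemma Wset_nonempty (hK : ∀ I : Finset (Fin n), I ∈ K ↔ (⋂ i ∈ I, U i).Nonempty)
    {α : Finset (Finset (Fin n))} (hα : α ∈ dual K) (hne : α.Nonempty) :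
    (Wset U α).Nonempty :=
  (hK _).1 (inf_mem_K hK hα hne)

lemma hH_true
    (hgood : ∀ I : Finset (Fin n), (⋂ i ∈ I, U i).Nonempty →
      Nonempty ((⋂ i ∈ I, U i) ≃ₜ (Metric.ball (0 : EuclideanSpace ℝ (Fin d)) 1)))
    (hK : ∀ I : Finset (Fin n), I ∈ K ↔ (⋂ i ∈ I, U i).Nonempty)
    {α : Finset (Finset (Fin n))} (hα : α ∈ dual K) (hne : α.Nonempty) :
    Nonempty (Wset U α ≃ₜ Metric.ball (0 : EuclideanSpace ℝ (Fin d)) 1) :=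
  hgood (α.inf id) (Wset_nonempty hK hα hne)

lemma bpt_norm_lt {α : Finset (Finset (Fin n))}
    {g : (Finset (Fin n) → ℝ) → EuclideanSpace ℝ (Fin d)} {x : Finset (Fin n) → ℝ} :
    ‖bptF U α g x‖ < 1 := by
  rw [bptF]
  split
  · split
    · rename_i hH hy
      exact mem_ball_zero_iff.1 ((Classical.choice hH) ⟨g (rP α x), hy⟩).2
    · simp
  · simp

lemma uFF_mem_ball {α : Finset (Finset (Fin n))}
    {g : (Finset (Fin n) → ℝ) → EuclideanSpace ℝ (Fin d)} {x : Finset (Fin n) → ℝ}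
    (h0 : 0 ≤ tP α x) (h1 : tP α x ≤ 1) :
    uFF U α g x ∈ Metric.ball (0 : EuclideanSpace ℝ (Fin d)) 1 := by
  rw [mem_ball_zero_iff, uFF, norm_smul, Real.norm_eq_abs, abs_of_nonneg h0]
  calc tP α x * ‖bptF U α g x‖ ≤ 1 * ‖bptF U α g x‖ :=
        mul_le_mul_of_nonneg_right h1 (norm_nonneg _)
    _ = ‖bptF U α g x‖ := one_mul _
    _ < 1 := bpt_norm_lt

lemma stepF_mem {α : Finset (Finset (Fin n))}
    (hH : Nonempty (Wset U α ≃ₜ Metric.ball (0 : EuclideanSpace ℝ (Fin d)) 1))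
    {g : (Finset (Fin n) → ℝ) → EuclideanSpace ℝ (Fin d)} {x : Finset (Fin n) → ℝ}
    (h0 : 0 ≤ tP α x) (h1 : tP α x ≤ 1) :
    stepF U α g x ∈ Wset U α := by
  rw [stepF, outF, dif_pos hH, dif_pos (uFF_mem_ball h0 h1)]
  exact ((Classical.choice hH).symm _).2

lemma memb
    (hgood : ∀ I : Finset (Fin n), (⋂ i ∈ I, U i).Nonempty →
      Nonempty ((⋂ i ∈ I, U i) ≃ₜ (Metric.ball (0 : EuclideanSpace ℝ (Fin d)) 1)))
    (hK : ∀ I : Finset (Fin n), I ∈ K ↔ (⋂ i ∈ I, U i).Nonempty) :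
    ∀ (m : ℕ) {x : Finset (Fin n) → ℝ}, x ∈ geom (dual K) → (supp x).card ≤ m →
      fA U m x ∈ Wset U (supp x) := by
  intro m
  induction m with
  | zero =>
      intro x hx hc
      obtain ⟨h0, h1, hs⟩ := mem_geom_iff.1 hx
      exact absurd (Finset.card_eq_zero.1 (Nat.le_zero.1 hc))
        (Finset.nonempty_iff_ne_empty.1 (supp_nonempty h1))
  | succ m ih =>
      intro x hx hc
      obtain ⟨h0, h1, hs⟩ := mem_geom_iff.1 hx
      by_cases h : (supp x).card ≤ m
      · rw [fA, if_pos h]; exact ih hx h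
      · rw [fA, if_neg h]
        have hne : (supp x).Nonempty := supp_nonempty h1
        have hxf : x ∈ geomFace (supp x) := mem_geomFace_supp h0 h1
        exact stepF_mem (hH_true hgood hK hs hne)
          (tP_nonneg hne hxf) (tP_le_one hne hxf)

lemma ffmap_mem
    (hgood : ∀ I : Finset (Fin n), (⋂ i ∈ I, U i).Nonempty →
      Nonempty ((⋂ i ∈ I, U i) ≃ₜ (Metric.ball (0 : EuclideanSpace ℝ (Fin d)) 1)))
    (hK : ∀ I : Finset (Fin n), I ∈ K ↔ (⋂ i ∈ I, U i).Nonempty)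
    {x : Finset (Fin n) → ℝ} (hx : x ∈ geom (dual K)) :
    ffmap U x ∈ Wset U (supp x) :=
  memb hgood hK _ hx le_rfl

/-! ### the identification lemma -/

lemma ident
    (hgood : ∀ I : Finset (Fin n), (⋂ i ∈ I, U i).Nonempty →
      Nonempty ((⋂ i ∈ I, U i) ≃ₜ (Metric.ball (0 : EuclideanSpace ℝ (Fin d)) 1)))
    (hK : ∀ I : Finset (Fin n), I ∈ K ↔ (⋂ i ∈ I, U i).Nonempty)
    {α : Finset (Finset (Fin n))} (hα : α ∈ dual K)
    {x : Finset (Fin n) → ℝ} (hx : x ∈ geom (dual K)) (hss : supp x ⊆ α) :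
    ffmap U x = stepF U α (ffmap U) x := by
  obtain ⟨h0, h1, hs⟩ := mem_geom_iff.1 hx
  have hne : (supp x).Nonempty := supp_nonempty h1
  have hαne : α.Nonempty := hne.mono hss
  have hxα : x ∈ geomFace α := ⟨h0, h1, fun w hw => hss (mem_supp.2 hw)⟩
  by_cases hsupp : supp x = α
  · subst hsupp
    obtain ⟨m, hm⟩ : ∃ m, (supp x).card = m + 1 :=
      Nat.exists_eq_succ_of_ne_zero (Finset.card_ne_zero.2 hne)
    rw [ffmap, hm]
    simp only [fA]
    rw [if_neg (by omega)]
    by_cases ht : tP (supp x) x = 0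
    · simp only [stepF, uFF, ht, zero_smul]
    · have hcard : (supp (rP (supp x) x)).card ≤ m := by
        have := supp_rP_card_lt hne hxα ht
        omega
      have heq : fA U m (rP (supp x) x) = ffmap U (rP (supp x) x) := fA_stab hcard
      simp only [stepF, uFF, bptF, heq]
  · have hone : tP α x = 1 := tP_eq_one_of_boundary hαne hxα hsupp
    have hrp : rP α x = x := rP_eq_self_of_boundary hxα hone
    have hy : ffmap U x ∈ Wset U α :=
      Wset_mono U hss (ffmap_mem hgood hK hx)
    have hH := hH_true hgood hK hα hαne
    rw [stepF, uFF, bptF, dif_pos hH, hrp, dif_pos hy, hone, one_smul, outF, dif_pos hH,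
      dif_pos (((Classical.choice hH) ⟨ffmap U x, hy⟩).2), Subtype.coe_eta,
      Homeomorph.symm_apply_apply]

/-! ### pasting continuity over closed pieces -/

lemma contOn_union_closed {X Y : Type*} [TopologicalSpace X] [TopologicalSpace Y]
    {f : X → Y} {A B : Set X} (hA : IsClosed A) (hB : IsClosed B)
    (hfA : ContinuousOn f A) (hfB : ContinuousOn f B) : ContinuousOn f (A ∪ B) := by
  intro x hx
  have cA : ContinuousWithinAt f A x := by
    by_cases h : x ∈ A
    · exact hfA x h
    · exact continuousWithinAt_of_notMem_closure (by rwa [hA.closure_eq])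
  have cB : ContinuousWithinAt f B x := by
    by_cases h : x ∈ B
    · exact hfB x h
    · exact continuousWithinAt_of_notMem_closure (by rwa [hB.closure_eq])
  exact cA.union cB

lemma contOn_finset_biUnion {X Y ι : Type*} [TopologicalSpace X] [TopologicalSpace Y]
    {f : X → Y} (s : Finset ι) (F : ι → Set X) (hcl : ∀ i ∈ s, IsClosed (F i))
    (hf : ∀ i ∈ s, ContinuousOn f (F i)) : ContinuousOn f (⋃ i ∈ s, F i) := by
  classical
  induction s using Finset.induction_on with
  | empty => simp only [Finset.notMem_empty, Set.iUnion_of_empty, Set.iUnion_empty]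
             exact continuousOn_empty f
  | @insert a s ha ih =>
      rw [Finset.set_biUnion_insert]
      exact contOn_union_closed (hcl a (Finset.mem_insert_self a s))
        (isClosed_biUnion_finset fun i hi => hcl i (Finset.mem_insert_of_mem hi))
        (hf a (Finset.mem_insert_self a s))
        (ih (fun i hi => hcl i (Finset.mem_insert_of_mem hi))
            (fun i hi => hf i (Finset.mem_insert_of_mem hi)))

lemma isClosed_geomFace (F : Finset (Finset (Fin n))) :
    IsClosed (geomFace F : Set (Finset (Fin n) → ℝ)) := by
  have hrw : (geomFace F : Set (Finset (Fin n) → ℝ)) =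
      (⋂ w, {x : Finset (Fin n) → ℝ | 0 ≤ x w}) ∩
      ({x : Finset (Fin n) → ℝ | (∑ w, x w) = 1} ∩
        ⋂ w, ⋂ (_ : w ∉ F), {x : Finset (Fin n) → ℝ | x w = 0}) := by
    ext x
    simp only [geomFace, Set.mem_inter_iff, Set.mem_iInter, Set.mem_setOf_eq]
    constructor
    · rintro ⟨a, b, c⟩
      exact ⟨a, b, fun w hw => by_contra fun h => hw (c w h)⟩
    · rintro ⟨a, b, c⟩
      exact ⟨a, b, fun w hw => by_contra fun h => hw (c w h)⟩
  rw [hrw]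
  refine IsClosed.inter (isClosed_iInter fun w =>
      isClosed_le continuous_const (continuous_apply w)) (IsClosed.inter ?_ ?_)
  · exact isClosed_eq (continuous_finset_sum _ fun w _ => continuous_apply w)
      continuous_const
  · exact isClosed_iInter fun w => isClosed_iInter fun _ =>
      isClosed_eq (continuous_apply w) continuous_const

/-! ### skeleta -/

variable (K) in
def Xset (m : ℕ) : Set (Finset (Fin n) → ℝ) :=
  ⋃ α ∈ ((dual K).filter fun β => β.card ≤ m), geomFace α

lemma Xset_subset_geom {m : ℕ} : Xset K m ⊆ geom (dual K) :=
  Set.iUnion₂_subset fun α hα => geomFace_subset_geom (Finset.mem_filter.1 hα).1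

lemma geomFace_subset_Xset {m : ℕ} {α : Finset (Finset (Fin n))}
    (hα : α ∈ dual K) (hcard : α.card ≤ m) : geomFace α ⊆ Xset K m :=
  fun y hy => Set.mem_iUnion₂.2 ⟨α, Finset.mem_filter.2 ⟨hα, hcard⟩, hy⟩

lemma geom_subset_Xset : geom (dual K) ⊆ Xset K (Fintype.card (Finset (Fin n))) := by
  intro x hx
  rcases Set.mem_iUnion₂.1 hx with ⟨β, hβ, hxβ⟩
  exact geomFace_subset_Xset hβ (Finset.card_le_univ β) hxβ

/-! ### the main continuity lemma -/

lemma contOn_face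
    (hgood : ∀ I : Finset (Fin n), (⋂ i ∈ I, U i).Nonempty →
      Nonempty ((⋂ i ∈ I, U i) ≃ₜ (Metric.ball (0 : EuclideanSpace ℝ (Fin d)) 1)))
    (hK : ∀ I : Finset (Fin n), I ∈ K ↔ (⋂ i ∈ I, U i).Nonempty)
    {m : ℕ} (IH : ContinuousOn (ffmap U) (Xset K m))
    {α : Finset (Finset (Fin n))} (hα : α ∈ dual K) (hcard : α.card = m + 1) :
    ContinuousOn (ffmap U) (geomFace α) := by
  have hαne : α.Nonempty := Finset.card_pos.1 (by omega)
  have hEq : Set.EqOn (ffmap U) (stepF U α (ffmap U)) (geomFace α) := fun x hx =>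
    ident hgood hK hα (geomFace_subset_geom hα hx) (supp_subset hx)
  refine ContinuousOn.congr ?_ hEq
  by_cases hH : Nonempty (Wset U α ≃ₜ Metric.ball (0 : EuclideanSpace ℝ (Fin d)) 1)
  swap
  · have h0 : stepF U α (ffmap U) = fun _ => 0 := by
      funext x; rw [stepF, outF, dif_neg hH]
    rw [h0]; exact continuousOn_const
  -- the outer homeomorphism-composition map, continuous on the ball
  have houter : ContinuousOn (outF U α)
      (Metric.ball (0 : EuclideanSpace ℝ (Fin d)) 1) := by
    rw [continuousOn_iff_continuous_restrict]
    have h1 : (Metric.ball (0 : EuclideanSpace ℝ (Fin d)) 1).domRestrict (outF U α)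
        = fun u : Metric.ball (0 : EuclideanSpace ℝ (Fin d)) 1 =>
            (((Classical.choice hH).symm u : Wset U α) : EuclideanSpace ℝ (Fin d)) := by
      funext u
      rw [Set.restrict_apply, outF, dif_pos hH, dif_pos u.2, Subtype.coe_eta]
    rw [h1]
    exact continuous_subtype_val.comp ((Classical.choice hH).symm.continuous)
  have hmaps : Set.MapsTo (uFF U α (ffmap U)) (geomFace α)
      (Metric.ball (0 : EuclideanSpace ℝ (Fin d)) 1) :=
    fun x hx => uFF_mem_ball (tP_nonneg hαne hx) (tP_le_one hαne hx)
  -- continuity of `uFF` away from the barycenter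
  have hDcont : ContinuousOn (uFF U α (ffmap U)) (geomFace α ∩ {bc α}ᶜ) := by
    set D := geomFace α ∩ {bc α}ᶜ with hD
    have htne : ∀ y ∈ D, tP α y ≠ 0 := fun y hy =>
      ne_of_gt (tP_pos hαne hy.1 hy.2)
    have hrcont : ContinuousOn (rP α) D := by
      apply continuousOn_pi.2
      intro J
      by_cases hJ : J ∈ α
      · simp only [rP, if_pos hJ]
        exact ((((continuous_apply J).sub continuous_const).continuousOn.div
          cont_tP.continuousOn htne).add continuousOn_const)
      · simp only [rP, if_neg hJ]; exact continuousOn_const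
    have hrmaps : Set.MapsTo (rP α) D (Xset K m) := by
      intro y hy
      have h1 : rP α y ∈ geomFace α := rP_mem hαne hy.1 (htne y hy)
      have hsupne : (supp (rP α y)).Nonempty := supp_nonempty h1.2.1
      have hsd : supp (rP α y) ∈ dual K := supp_mem_dual hα (supp_subset h1) hsupne
      have hcd : (supp (rP α y)).card ≤ m := by
        have := supp_rP_card_lt hαne hy.1 (htne y hy); omega
      exact geomFace_subset_Xset hsd hcd (mem_geomFace_supp h1.1 h1.2.1)
    have hffr : ContinuousOn (fun y => ffmap U (rP α y)) D := IH.comp hrcont hrmaps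
    have hyall : ∀ y ∈ D, ffmap U (rP α y) ∈ Wset U α := fun y hy =>
      Wset_mono U (supp_subset (rP_mem hαne hy.1 (htne y hy)))
        (ffmap_mem hgood hK (Xset_subset_geom (hrmaps hy)))
    have hbpt : ContinuousOn (bptF U α (ffmap U)) D := by
      rw [continuousOn_iff_continuous_restrict]
      have h2 : D.domRestrict (bptF U α (ffmap U)) = fun y : D =>
          (((Classical.choice hH) ⟨ffmap U (rP α y), hyall y y.2⟩ :
            Metric.ball (0 : EuclideanSpace ℝ (Fin d)) 1) : EuclideanSpace ℝ (Fin d)) := by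
        funext y
        rw [Set.restrict_apply, bptF, dif_pos hH, dif_pos (hyall y y.2)]
      rw [h2]
      refine continuous_subtype_val.comp ((Classical.choice hH).continuous.comp ?_)
      exact Continuous.subtype_mk (continuousOn_iff_continuous_restrict.1 hffr) _
    exact cont_tP.continuousOn.smul hbpt
  -- full continuity of `uFF`
  have huFF : ContinuousOn (uFF U α (ffmap U)) (geomFace α) := by
    intro x hx
    by_cases hxb : x = bc α
    · subst hxb
      have h0 : uFF U α (ffmap U) (bc α) = 0 := by rw [uFF, tP_bc hαne, zero_smul]
      rw [ContinuousWithinAt, h0]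
      refine squeeze_zero_norm' (a := tP α) ?_ ?_
      · refine eventually_nhdsWithin_of_forall fun y hy => ?_
        rw [uFF, norm_smul, Real.norm_eq_abs, abs_of_nonneg (tP_nonneg hαne hy)]
        calc tP α y * ‖bptF U α (ffmap U) y‖ ≤ tP α y * 1 :=
              mul_le_mul_of_nonneg_left (le_of_lt bpt_norm_lt) (tP_nonneg hαne hy)
          _ = tP α y := mul_one _
      · have h1 := (cont_tP (α := α)).tendsto (bc α)
        rw [tP_bc hαne] at h1
        exact h1.mono_left nhdsWithin_le_nhds
    · have hmemn : ({bc α}ᶜ : Set (Finset (Fin n) → ℝ)) ∈ nhds x :=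
        isOpen_compl_singleton.mem_nhds hxb
      exact (continuousWithinAt_inter hmemn).1 (hDcont x ⟨hx, hxb⟩)
  exact houter.comp huFF hmaps

/-! ### continuity on all skeleta -/

lemma contOn_Xset
    (hgood : ∀ I : Finset (Fin n), (⋂ i ∈ I, U i).Nonempty →
      Nonempty ((⋂ i ∈ I, U i) ≃ₜ (Metric.ball (0 : EuclideanSpace ℝ (Fin d)) 1)))
    (hK : ∀ I : Finset (Fin n), I ∈ K ↔ (⋂ i ∈ I, U i).Nonempty) :
    ∀ m : ℕ, ContinuousOn (ffmap U) (Xset K m) := by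
  intro m
  induction m with
  | zero =>
      have hempty : Xset K 0 = (∅ : Set (Finset (Fin n) → ℝ)) := by
        refine Set.eq_empty_of_forall_notMem fun x hx => ?_
        rcases Set.mem_iUnion₂.1 hx with ⟨β, hβ, hxβ⟩
        have hβ0 : β.card ≤ 0 := (Finset.mem_filter.1 hβ).2
        have : supp x ⊆ β := supp_subset hxβ
        have hne : (supp x).Nonempty := supp_nonempty hxβ.2.1
        have := Finset.card_le_card this
        have := Finset.card_pos.2 hne
        omega
      rw [hempty]; exact continuousOn_empty _
  | succ m ih =>
      rw [Xset]
      refine contOn_finset_biUnion _ _ (fun β _ => isClosed_geomFace β) ?_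
      intro β hβ
      obtain ⟨hβd, hβc⟩ := Finset.mem_filter.1 hβ
      by_cases h : β.card ≤ m
      · exact ih.mono (geomFace_subset_Xset hβd h)
      · exact contOn_face hgood hK ih hβd (by omega)

lemma cont_ffmap
    (hgood : ∀ I : Finset (Fin n), (⋂ i ∈ I, U i).Nonempty →
      Nonempty ((⋂ i ∈ I, U i) ≃ₜ (Metric.ball (0 : EuclideanSpace ℝ (Fin d)) 1)))
    (hK : ∀ I : Finset (Fin n), I ∈ K ↔ (⋂ i ∈ I, U i).Nonempty) :
    ContinuousOn (ffmap U) (geom (dual K)) :=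
  (contOn_Xset hgood hK _).mono geom_subset_Xset

end WithCover

end Stmt10


open Stmt10 in
/-- the nerve of a good cover in `ℝ^d` admits a faithful
continuous map `|K'| → ℝ^d`, and is consequently `d`-Matoušek. -/
theorem stmt10 {d n : ℕ} (U : Fin n → Set (EuclideanSpace ℝ (Fin d)))
    (hopen : ∀ i, IsOpen (U i))
    (hgood : ∀ I : Finset (Fin n), (⋂ i ∈ I, U i).Nonempty →
      Nonempty ((⋂ i ∈ I, U i) ≃ₜ (Metric.ball (0 : EuclideanSpace ℝ (Fin d)) 1)))
    (K : Finset (Finset (Fin n)))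
    (hK : ∀ I : Finset (Fin n), I ∈ K ↔ (⋂ i ∈ I, U i).Nonempty) :
    (∃ f : (Finset (Fin n) → ℝ) → EuclideanSpace ℝ (Fin d),
      ContinuousOn f (geom (dual K)) ∧ Faithful K f) ∧
    Matousek d K := by

  classical
  constructor
  · refine ⟨ffmap U, cont_ffmap hgood hK, ?_⟩
    rintro I ⟨p, hp⟩
    refine (hK I).2 ⟨p, Set.mem_iInter₂.2 fun i hi => ?_⟩
    obtain ⟨x, hxmem, hfx⟩ := Set.mem_iInter₂.1 hp i hi
    have hsne : (supp x).Nonempty := supp_nonempty hxmem.2.1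
    have hifin : i ∈ (supp x).inf id := by
      have h1 : ({i} : Finset (Fin n)) ≤ (supp x).inf id :=
        Finset.le_inf fun J hJ => Finset.le_iff_subset.mpr
          (Finset.singleton_subset_iff.2
            ((Finset.mem_filter.1 (supp_subset hxmem hJ)).2))
      exact Finset.singleton_subset_iff.1 (Finset.le_iff_subset.mp h1)
    have hsd : supp x ∈ dual K := mem_dual.2
      ⟨(supp_subset hxmem).trans (Finset.filter_subset _ _), ⟨i, hifin⟩⟩
    have hxg : x ∈ geom (dual K) := mem_geom_iff.2 ⟨hxmem.1, hxmem.2.1, hsd⟩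
    have hmem := ffmap_mem hgood hK hxg
    rw [hfx] at hmem
    exact mem_U_of_mem_Wset hmem hifin
  · -- Matoušek property
    have hne : ∀ z : (Hhat K), ffmap U z.1.1 - ffmap U z.1.2 ≠ 0 := by
      rintro ⟨⟨x, y⟩, hx, hy, hnot⟩ heq
      apply hnot
      refine (hK _).2 ⟨ffmap U x, Set.mem_iInter₂.2 fun i hi => ?_⟩
      have h1 := ffmap_mem hgood hK hx
      have h2 := ffmap_mem hgood hK hy
      have hxy : ffmap U x = ffmap U y := sub_eq_zero.1 heq
      rcases Finset.mem_union.1 hi with h | h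
      · exact mem_U_of_mem_Wset h1 h
      · rw [hxy]; exact mem_U_of_mem_Wset h2 h
    refine ⟨fun z => ‖ffmap U z.1.1 - ffmap U z.1.2‖⁻¹ • (ffmap U z.1.1 - ffmap U z.1.2),
      ?_, ?_, ?_⟩
    · have c1 : Continuous fun z : Hhat K => ffmap U z.1.1 :=
        (cont_ffmap hgood hK).comp_continuous
          (continuous_fst.comp continuous_subtype_val) (fun z => z.2.1)
      have c2 : Continuous fun z : Hhat K => ffmap U z.1.2 :=
        (cont_ffmap hgood hK).comp_continuous
          (continuous_snd.comp continuous_subtype_val) (fun z => z.2.2.1)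
      exact (((c1.sub c2).norm).inv₀ fun z => norm_ne_zero_iff.2 (hne z)).smul (c1.sub c2)
    · intro z
      rw [norm_smul, norm_inv, norm_norm, inv_mul_cancel₀ (norm_ne_zero_iff.2 (hne z))]
    · intro x y hxy hyx
      show ‖ffmap U y - ffmap U x‖⁻¹ • (ffmap U y - ffmap U x)
        = -(‖ffmap U x - ffmap U y‖⁻¹ • (ffmap U x - ffmap U y))
      rw [show ffmap U y - ffmap U x = -(ffmap U x - ffmap U y) from (neg_sub _ _).symm,
        norm_neg, smul_neg]
end
end

section
/- Any affine map sending the vertices of a finite simplicial complex L of dimension m to points in general position in ℝ^{2m+1} (e.g., distinct points on the moment curve t ↦ (t, t², …, t^{2m+1})) restricts to an injective map on the geometric realization |L|. -/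
open scoped BigOperators

noncomputable section

variable {V : Type*} [Fintype V] [DecidableEq V]

/-! Two points `x, y` of `|L|` lie in faces `F, G` with `|F ∪ G| ≤ 2m + 2`, so both are affine
weight vectors supported on one set `S = F ∪ G` of vertices. The points `p s`, `s ∈ S`, are
affinely independent, so barycentric coordinates with respect to them are unique:
`affExt p x = affExt p y` forces `x = y`. -/

open Finset

section

variable {W : Type*} [Fintype W]

theorem geomFace_mono {F G : Finset W} (h : F ⊆ G) : geomFace F ⊆ geomFace G :=
  fun _ ⟨hx0, hx1, hxF⟩ => ⟨hx0, hx1, fun w hw => h (hxF w hw)⟩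

variable {E : Type*} [AddCommGroup E] [Module ℝ E]

theorem eq_of_affExt_eq_of_affineIndependent {p : W → E} {S : Finset W}
    (hp : AffineIndependent ℝ fun s : S => p s) {x y : W → ℝ}
    (hx : ∑ w, x w = 1) (hy : ∑ w, y w = 1)
    (hxS : ∀ w, x w ≠ 0 → w ∈ S) (hyS : ∀ w, y w ≠ 0 → w ∈ S)
    (hxy : affExt p x = affExt p y) : x = y := by
  have restrict_sum (z : W → ℝ) (hzS : ∀ w, z w ≠ 0 → w ∈ S) :
      ∑ s : S, z s = ∑ w, z w :=
    (sum_coe_sort S z).trans (Fintype.sum_subset hzS)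
  have affExt_eq (z : W → ℝ) (hzS : ∀ w, z w ≠ 0 → w ∈ S) (hz : ∑ s : S, z s = 1) :
      univ.affineCombination ℝ (fun s : S => p s) (fun s : S => z s) = affExt p z := by
    rw [affineCombination_eq_linear_combination _ _ _ hz, affExt,
      sum_coe_sort S fun w => z w • p w]
    exact Fintype.sum_subset fun w h => hzS w (left_ne_zero_of_smul h)
  have hx' : ∑ s : S, x s = 1 := (restrict_sum x hxS).trans hx
  have hy' : ∑ s : S, y s = 1 := (restrict_sum y hyS).trans hy
  have hxy_S : (fun s : S => x s) = fun s : S => y s :=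
    (affineIndependent_iff_eq_of_fintype_affineCombination_eq ℝ _).1 hp _ _ hx' hy'
      (by rw [affExt_eq x hxS hx', affExt_eq y hyS hy', hxy])
  funext w
  by_cases hw : w ∈ S
  · exact congrFun hxy_S ⟨w, hw⟩
  · rw [not_not.1 (mt (hxS w) hw), not_not.1 (mt (hyS w) hw)]

theorem injOn_geomFace_of_affineIndependent {p : W → E} {S : Finset W}
    (hp : AffineIndependent ℝ fun s : S => p s) : Set.InjOn (affExt p) (geomFace S) :=
  fun _ hx _ hy hxy => eq_of_affExt_eq_of_affineIndependent hp hx.2.1 hy.2.1 hx.2.2 hy.2.2 hxy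

end

/-- an affine map sending the vertices of an `m`-dimensional
complex to points in general position in `ℝ^{2m+1}` is injective on `|L|`. -/
theorem stmt13 {W : Type*} [Fintype W] [DecidableEq W] {m : ℕ}
    (L : Finset (Finset W)) (hdim : ∀ F ∈ L, F.card ≤ m + 1)
    (p : W → EuclideanSpace ℝ (Fin (2 * m + 1)))
    (hgp : ∀ S : Finset W, S.card ≤ 2 * m + 2 →
      AffineIndependent ℝ (fun s : S => p s)) :
    Set.InjOn (affExt p) (geom L) := by
  rintro x hx y hy hxy
  simp only [geom, Set.mem_iUnion] at hx hy
  obtain ⟨F, hF, hx⟩ := hx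
  obtain ⟨G, hG, hy⟩ := hy
  have hcard : (F ∪ G).card ≤ 2 * m + 2 :=
    (card_union_le F G).trans (by linarith [hdim F hF, hdim G hG])
  exact injOn_geomFace_of_affineIndependent (hgp _ hcard)
    (geomFace_mono subset_union_left hx) (geomFace_mono subset_union_right hy) hxy
end
end
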